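/- Let d ≥ 1 and s be a positive integer. Suppose that every pure (d−1)-dimensional flag-no-square simplicial complex in which every (d−2)-dimensional face is contained in at least two facets has at least s facets. Then every pure d-dimensional flag-no-square simplicial complex Δ in which every (d−1)-dimensional face is contained in at least two facets satisfies f_0(Δ) > s and (d+1)·f_d(Δ) > s². -/

import Mathlib

open Finset

variable {V : Type} [DecidableEq V] [Fintype V]

/-- `K` is (the set of faces of) an abstract simplicial complex on `V`:
nonempty (contains the empty face) and closed under taking subsets. -/
def IsComplex (K : Finset (Finset V)) : Prop :=
  ∅ ∈ K ∧ ∀ σ ∈ K, ∀ τ ⊆ σ, τ ∈ K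

/-- The facets (maximal faces) of `K`. -/
def facets (K : Finset (Finset V)) : Finset (Finset V) :=
  K.filter fun σ => ∀ τ ∈ K, σ ⊆ τ → τ = σ

/-- `K` is pure `d`-dimensional: every facet has `d + 1` vertices. -/
def IsPure (K : Finset (Finset V)) (d : ℕ) : Prop :=
  ∀ σ ∈ facets K, σ.card = d + 1

/-- `fNum K i` is the number of `i`-dimensional faces (faces with `i + 1` vertices). -/
def fNum (K : Finset (Finset V)) (i : ℕ) : ℕ :=
  (K.filter fun σ => σ.card = i + 1).card

/-- `K` is flag: every set of vertices of `K` that are pairwise joined by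
edges of `K` is a face of `K`. -/
def IsFlag (K : Finset (Finset V)) : Prop :=
  ∀ τ : Finset V, (∀ v ∈ τ, ({v} : Finset V) ∈ K) →
    (∀ u ∈ τ, ∀ w ∈ τ, u ≠ w → ({u, w} : Finset V) ∈ K) → τ ∈ K

/-- `K` has no induced 4-cycle: there are no four distinct vertices `a b c d`
with `ab, bc, cd, da` faces and `ac, bd` non-faces. -/
def NoSquare (K : Finset (Finset V)) : Prop :=
  ¬ ∃ a b c d : V, ({a, b, c, d} : Finset V).card = 4 ∧
    ({a, b} : Finset V) ∈ K ∧ ({b, c} : Finset V) ∈ K ∧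
    ({c, d} : Finset V) ∈ K ∧ ({d, a} : Finset V) ∈ K ∧
    ({a, c} : Finset V) ∉ K ∧ ({b, d} : Finset V) ∉ K

/-- Every face with `d` vertices (i.e. of dimension `d - 1`) is contained in
at least two facets. -/
def NoFree (K : Finset (Finset V)) (d : ℕ) : Prop :=
  ∀ σ ∈ K, σ.card = d → 2 ≤ ((facets K).filter fun F => σ ⊆ F).card

/-- The link of a face `σ`. -/
def link (K : Finset (Finset V)) (σ : Finset V) : Finset (Finset V) :=
  K.filter fun τ => τ ∩ σ = ∅ ∧ τ ∪ σ ∈ K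

/-!
The link of a vertex `v` is again a pure flag complex without induced 4-cycles or free ridges,
one dimension lower, so it has at least `s` facets `τ`. The ridge `τ` lies in a second facet
`τ ∪ {g}`, and flagness forces `g` to be a non-neighbour of `v`. If two facets `τ, τ'` of the
link gave the same `g`, the absence of induced 4-cycles `u v w g` would make every vertex of `τ`
adjacent to every vertex of `τ'`, so `τ ∪ τ' ∪ {v}` would be a face and `τ = τ'`. Hence `v` has
at least `s` non-neighbours and `f₀ > s`. Since every vertex lies in at least `s` facets, counting
vertex–facet incidences gives `(d + 1) f_d ≥ f₀ s > s²`.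
-/

section
omit [Fintype V]

variable {K : Finset (Finset V)}

theorem IsComplex.pair_mem (hK : IsComplex K) {σ : Finset V} (hσ : σ ∈ K) {u w : V}
    (hu : u ∈ σ) (hw : w ∈ σ) : ({u, w} : Finset V) ∈ K :=
  hK.2 σ hσ _ (insert_subset hu (singleton_subset_iff.2 hw))

theorem IsFlag.union_mem (hK : IsComplex K) (hflag : IsFlag K) {σ τ : Finset V}
    (hσ : σ ∈ K) (hτ : τ ∈ K)
    (hστ : ∀ u ∈ σ, ∀ w ∈ τ, u ≠ w → ({u, w} : Finset V) ∈ K) : σ ∪ τ ∈ K := by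
  refine hflag _ (fun u hu => ?_) fun u hu w hw huw => ?_
  · rcases mem_union.1 hu with hu | hu
    · exact hK.2 σ hσ _ (singleton_subset_iff.2 hu)
    · exact hK.2 τ hτ _ (singleton_subset_iff.2 hu)
  · rcases mem_union.1 hu with hu | hu <;> rcases mem_union.1 hw with hw | hw
    · exact hK.pair_mem hσ hu hw
    · exact hστ u hu w hw huw
    · rw [pair_comm]; exact hστ w hw u hu huw.symm
    · exact hK.pair_mem hτ hu hw

theorem NoSquare.pair_mem_of_not_mem (hK : IsComplex K) (hns : NoSquare K) {v g u w : V}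
    (hvg : ({v, g} : Finset V) ∉ K) (huv : ({u, v} : Finset V) ∈ K)
    (hug : ({u, g} : Finset V) ∈ K) (hwv : ({w, v} : Finset V) ∈ K)
    (hwg : ({w, g} : Finset V) ∈ K) (huw : u ≠ w) : ({u, w} : Finset V) ∈ K := by
  have hvg' : v ≠ g := by rintro rfl; exact hvg (hK.2 _ huv _ (by simp))
  have huv' : u ≠ v := by rintro rfl; exact hvg hug
  have hug' : u ≠ g := by rintro rfl; exact hvg (pair_comm u v ▸ huv)
  have hwv' : w ≠ v := by rintro rfl; exact hvg hwg
  have hwg' : w ≠ g := by rintro rfl; exact hvg (pair_comm w v ▸ hwv)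
  by_contra huw'
  exact hns ⟨u, v, w, g, by simp [card_insert_of_notMem, *, Ne.symm hwv'],
    huv, pair_comm w v ▸ hwv, hwg, pair_comm u g ▸ hug, huw', hvg⟩

theorem NoSquare.insert_union_insert_mem (hK : IsComplex K) (hflag : IsFlag K) (hns : NoSquare K)
    {v g : V} (hvg : ({v, g} : Finset V) ∉ K) {τ τ' : Finset V} (h1 : insert v τ ∈ K)
    (h1' : insert v τ' ∈ K) (h2 : insert g τ ∈ K) (h2' : insert g τ' ∈ K) :
    insert v τ ∪ insert v τ' ∈ K := by
  refine hflag.union_mem hK h1 h1' fun u hu w hw huw => ?_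
  rcases mem_insert.1 hu with rfl | huτ
  · exact hK.pair_mem h1' (mem_insert_self _ _) hw
  rcases mem_insert.1 hw with rfl | hwτ
  · exact hK.pair_mem h1 (mem_insert_of_mem huτ) (mem_insert_self _ _)
  exact hns.pair_mem_of_not_mem hK hvg
    (hK.pair_mem h1 (mem_insert_of_mem huτ) (mem_insert_self _ _))
    (hK.pair_mem h2 (mem_insert_of_mem huτ) (mem_insert_self _ _))
    (hK.pair_mem h1' (mem_insert_of_mem hwτ) (mem_insert_self _ _))
    (hK.pair_mem h2' (mem_insert_of_mem hwτ) (mem_insert_self _ _)) huw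

theorem link_subset (σ : Finset V) : link K σ ⊆ K := filter_subset _ _

theorem mem_link_singleton (hK : IsComplex K) {v : V} {τ : Finset V} :
    τ ∈ link K {v} ↔ v ∉ τ ∧ insert v τ ∈ K := by
  simp only [link, mem_filter, union_singleton, ← disjoint_iff_inter_eq_empty,
    disjoint_singleton_right]
  exact ⟨fun h => h.2, fun h => ⟨hK.2 _ h.2 _ (subset_insert v τ), h⟩⟩

theorem isComplex_link (hK : IsComplex K) {v : V} (hv : {v} ∈ K) :
    IsComplex (link K {v}) := by
  refine ⟨(mem_link_singleton hK).2 ⟨notMem_empty v, hv⟩, fun σ hσ τ hτσ => ?_⟩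
  rw [mem_link_singleton hK] at hσ ⊢
  exact ⟨fun h => hσ.1 (hτσ h), hK.2 _ hσ.2 _ (insert_subset_insert v hτσ)⟩

theorem IsFlag.mem_link_of_forall_singleton_mem (hK : IsComplex K) (hflag : IsFlag K) {v : V}
    (hv : {v} ∈ K) {τ : Finset V} (hτ : τ ∈ K)
    (hτv : ∀ u ∈ τ, ({u} : Finset V) ∈ link K {v}) : τ ∈ link K {v} := by
  have hnbr : ∀ u ∈ τ, u ≠ v ∧ ({v, u} : Finset V) ∈ K := fun u hu => by
    simpa [mem_link_singleton hK, eq_comm] using hτv u hu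
  refine (mem_link_singleton hK).2 ⟨fun h => (hnbr v h).1 rfl, ?_⟩
  rw [insert_eq]
  refine hflag.union_mem hK hv hτ fun u hu w hw _ => ?_
  rw [mem_singleton.1 hu]
  exact (hnbr w hw).2

theorem isFlag_link (hK : IsComplex K) (hflag : IsFlag K) {v : V} (hv : {v} ∈ K) :
    IsFlag (link K {v}) := fun τ hτv hτe =>
  hflag.mem_link_of_forall_singleton_mem hK hv
    (hflag τ (fun u hu => link_subset _ (hτv u hu))
      fun u hu w hw huw => link_subset _ (hτe u hu w hw huw)) hτv

theorem noSquare_link (hK : IsComplex K) (hflag : IsFlag K) (hns : NoSquare K) {v : V}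
    (hv : {v} ∈ K) : NoSquare (link K {v}) := by
  rintro ⟨a, b, c, e, hcard, hab, hbc, hce, hea, hac, hbe⟩
  have hvert {x y : V} (h : ({x, y} : Finset V) ∈ link K {v}) :
      ({x} : Finset V) ∈ link K {v} ∧ ({y} : Finset V) ∈ link K {v} :=
    ⟨(isComplex_link hK hv).2 _ h _ (by simp), (isComplex_link hK hv).2 _ h _ (by simp)⟩
  have hinduced {x y : V} (hx : ({x} : Finset V) ∈ link K {v})
      (hy : ({y} : Finset V) ∈ link K {v}) (hxy : ({x, y} : Finset V) ∈ K) :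
      ({x, y} : Finset V) ∈ link K {v} :=
    hflag.mem_link_of_forall_singleton_mem hK hv hxy (by simp [hx, hy])
  exact hns ⟨a, b, c, e, hcard, link_subset _ hab, link_subset _ hbc, link_subset _ hce,
    link_subset _ hea, fun h => hac (hinduced (hvert hab).1 (hvert hbc).2 h),
    fun h => hbe (hinduced (hvert hab).2 (hvert hce).2 h)⟩

end

section

variable {K : Finset (Finset V)} {d : ℕ}

theorem mem_facets {F : Finset V} : F ∈ facets K ↔ F ∈ K ∧ ∀ τ ∈ K, F ⊆ τ → τ = F :=
  mem_filter

theorem exists_facet_superset {σ : Finset V} (hσ : σ ∈ K) : ∃ F ∈ facets K, σ ⊆ F := by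
  obtain ⟨F, hF, hmax⟩ :=
    exists_max_image {τ ∈ K | σ ⊆ τ} card ⟨σ, mem_filter.2 ⟨hσ, subset_rfl⟩⟩
  rw [mem_filter] at hF
  refine ⟨F, mem_facets.2 ⟨hF.1, fun τ hτ hFτ => ?_⟩, hF.2⟩
  exact (eq_of_subset_of_card_le hFτ (hmax τ (mem_filter.2 ⟨hτ, hF.2.trans hFτ⟩))).symm

theorem IsPure.card_le (hpure : IsPure K d) {σ : Finset V} (hσ : σ ∈ K) : #σ ≤ d + 1 := by
  obtain ⟨F, hF, hσF⟩ := exists_facet_superset hσ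
  exact (card_le_card hσF).trans (hpure F hF).le

theorem IsPure.fNum_eq_card_facets (hpure : IsPure K d) : fNum K d = #(facets K) := by
  refine congrArg card (filter_congr fun σ hσ =>
    ⟨fun hc => ?_, fun hmax => hpure σ (mem_facets.2 ⟨hσ, hmax⟩)⟩)
  obtain ⟨F, hF, hσF⟩ := exists_facet_superset hσ
  rw [eq_of_subset_of_card_le hσF (by rw [hpure F hF, hc])]
  exact (mem_facets.1 hF).2

theorem fNum_zero_eq_card (hvert : ∀ v : V, ({v} : Finset V) ∈ K) :
    fNum K 0 = Fintype.card V := by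
  have hvertices : {σ ∈ K | #σ = 0 + 1} = univ.map ⟨singleton, singleton_injective⟩ := by
    ext σ
    simp only [mem_filter, zero_add, card_eq_one, mem_map, mem_univ, true_and,
      Function.Embedding.coeFn_mk]
    constructor
    · rintro ⟨-, v, rfl⟩
      exact ⟨v, rfl⟩
    · rintro ⟨v, rfl⟩
      exact ⟨hvert v, v, rfl⟩
  rw [fNum, hvertices, card_map, card_univ]

theorem mem_facets_link (hK : IsComplex K) {v : V} {F : Finset V} :
    F ∈ facets (link K {v}) ↔ v ∉ F ∧ insert v F ∈ facets K := by
  simp only [mem_facets, mem_link_singleton hK]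
  constructor
  · rintro ⟨⟨hvF, hF⟩, hmax⟩
    refine ⟨hvF, hF, fun G hG hFG => ?_⟩
    have hvG : v ∈ G := hFG (mem_insert_self v F)
    have hsub : F ⊆ G.erase v := erase_insert hvF ▸ erase_subset_erase v hFG
    rw [← hmax (G.erase v) ⟨notMem_erase v G, by rwa [insert_erase hvG]⟩ hsub, insert_erase hvG]
  · rintro ⟨hvF, hF, hmax⟩
    refine ⟨⟨hvF, hF⟩, fun τ ⟨hvτ, hτ⟩ hFτ => ?_⟩
    rw [← erase_insert hvτ, hmax _ hτ (insert_subset_insert v hFτ), erase_insert hvF]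

theorem card_filter_facets_link {v : V} {σ : Finset V} (hK : IsComplex K) (hvσ : v ∉ σ) :
    #{F ∈ facets (link K {v}) | σ ⊆ F} = #{F ∈ facets K | insert v σ ⊆ F} := by
  refine card_nbij' (insert v) (fun F => F.erase v) (fun F hF => ?_) (fun F hF => ?_)
    (fun F hF => ?_) fun F hF => ?_
  all_goals simp only [coe_filter, Set.mem_ofPred_eq, mem_facets_link hK] at hF ⊢
  · exact ⟨hF.1.2, insert_subset_insert v hF.2⟩
  · have hvF := hF.2 (mem_insert_self v σ)
    exact ⟨⟨notMem_erase v F, by rw [insert_erase hvF]; exact hF.1⟩,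
      erase_insert hvσ ▸ erase_subset_erase v hF.2⟩
  · exact erase_insert hF.1.1
  · exact insert_erase (hF.2 (mem_insert_self v σ))

theorem card_facets_link (hK : IsComplex K) (v : V) :
    #(facets (link K {v})) = #{F ∈ facets K | v ∈ F} := by
  simpa using card_filter_facets_link hK (notMem_empty v)

theorem isPure_link (hK : IsComplex K) (hpure : IsPure K (d + 1)) {v : V} :
    IsPure (link K {v}) d := fun F hF => by
  obtain ⟨hvF, hF⟩ := (mem_facets_link hK).1 hF
  simpa [card_insert_of_notMem hvF] using hpure _ hF

theorem noFree_link (hK : IsComplex K) (hfree : NoFree K (d + 1)) {v : V} :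
    NoFree (link K {v}) d := fun σ hσ hc => by
  obtain ⟨hvσ, hσK⟩ := (mem_link_singleton hK).1 hσ
  rw [card_filter_facets_link hK hvσ]
  exact hfree _ hσK (by rw [card_insert_of_notMem hvσ, hc])

theorem NoFree.exists_insert_mem_facets_ne (hpure : IsPure K d) (hfree : NoFree K d)
    {σ : Finset V} (hσ : σ ∈ K) (hc : #σ = d) (F : Finset V) :
    ∃ g ∉ σ, insert g σ ∈ facets K ∧ insert g σ ≠ F := by
  obtain ⟨G, hG, hGF⟩ := exists_mem_ne (hfree σ hσ hc) F
  rw [mem_filter] at hG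
  obtain ⟨g, hg, rfl⟩ := exists_eq_insert_iff.2 ⟨hG.2, by rw [hc, hpure G hG.1]⟩
  exact ⟨g, hg, hG.1, hGF⟩

theorem IsFlag.pair_not_mem_of_insert_mem (hK : IsComplex K) (hflag : IsFlag K)
    (hpure : IsPure K d) {σ : Finset V} (hc : #σ = d) {v g : V} (hv : v ∉ σ) (hg : g ∉ σ)
    (hvg : v ≠ g) (h1 : insert v σ ∈ K) (h2 : insert g σ ∈ K) : ({v, g} : Finset V) ∉ K := by
  intro hvgK
  have hface : {v} ∪ insert g σ ∈ K := by
    refine hflag.union_mem hK (hK.2 _ h1 _ (singleton_subset_iff.2 (mem_insert_self v σ))) h2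
      fun u hu w hw _ => ?_
    rw [mem_singleton.1 hu]
    rcases mem_insert.1 hw with rfl | hw
    · exact hvgK
    · exact hK.pair_mem h1 (mem_insert_self v σ) (mem_insert_of_mem hw)
  have := hpure.card_le hface
  rw [← insert_eq, card_insert_of_notMem (by simp [hvg, hv]), card_insert_of_notMem hg, hc]
    at this
  omega

/-- The map `τ ↦ g`, where `insert g τ` is a second facet through the ridge `τ`, is injective
into the non-neighbours of `v`. -/
theorem card_facets_link_le (hK : IsComplex K) (hpure : IsPure K d) (hflag : IsFlag K)
    (hns : NoSquare K) (hfree : NoFree K d) (v : V) :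
    #(facets (link K {v})) ≤ #{g | ({v, g} : Finset V) ∉ K} := by
  refine card_le_card_of_forall_subsingleton (fun τ g => insert g τ ∈ K) (fun τ hτ => ?_)
    fun g hg τ hτ τ' hτ' => ?_
  · obtain ⟨hvτ, hF⟩ := (mem_facets_link hK).1 hτ
    have hc : #τ + 1 = d + 1 := card_insert_of_notMem hvτ ▸ hpure _ hF
    obtain ⟨g, hgτ, hgF, hne⟩ := hfree.exists_insert_mem_facets_ne hpure
      (hK.2 _ (mem_facets.1 hF).1 _ (subset_insert v τ)) (by omega) (insert v τ)
    refine ⟨g, mem_filter.2 ⟨mem_univ g, ?_⟩, (mem_facets.1 hgF).1⟩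
    exact hflag.pair_not_mem_of_insert_mem hK hpure (by omega) hvτ hgτ
      (by rintro rfl; exact hne rfl) (mem_facets.1 hF).1 (mem_facets.1 hgF).1
  · obtain ⟨hvτ, hF⟩ := (mem_facets_link hK).1 hτ.1
    obtain ⟨hvτ', hF'⟩ := (mem_facets_link hK).1 hτ'.1
    have hunion := hns.insert_union_insert_mem hK hflag (mem_filter.1 hg).2 (mem_facets.1 hF).1
      (mem_facets.1 hF').1 hτ.2 hτ'.2
    have h1 := (mem_facets.1 hF).2 _ hunion subset_union_left
    have h2 := (mem_facets.1 hF').2 _ (union_comm (insert v τ) _ ▸ hunion) subset_union_left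
    rw [← erase_insert hvτ, ← erase_insert hvτ', ← h1.symm.trans ((union_comm _ _).trans h2)]

theorem card_facets_link_lt_card (hK : IsComplex K) (hpure : IsPure K d) (hflag : IsFlag K)
    (hns : NoSquare K) (hfree : NoFree K d) {v : V} (hv : {v} ∈ K) :
    #(facets (link K {v})) < Fintype.card V :=
  (card_facets_link_le hK hpure hflag hns hfree v).trans_lt
    (card_lt_univ_of_notMem (x := v) (by simpa using hv))

end

/-- Recursive step: if every pure `(d-1)`-dimensional flag-no-square simplicial
complex with no free `(d-2)`-faces has at least `s` facets, then every pure
`d`-dimensional flag-no-square simplicial complex with no free `(d-1)`-faces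
has more than `s` vertices and satisfies `(d+1) · f_d > s²`. -/
theorem recursive_bounds (d s : ℕ) (hd : 1 ≤ d) (hs : 1 ≤ s)
    (hyp : ∀ (W : Type) [DecidableEq W] [Fintype W] (L : Finset (Finset W)),
      IsComplex L → IsPure L (d - 1) → IsFlag L → NoSquare L →
      NoFree L (d - 1) → s ≤ (facets L).card)
    {V : Type} [DecidableEq V] [Fintype V] (K : Finset (Finset V))
    (hK : IsComplex K) (hvert : ∀ v : V, ({v} : Finset V) ∈ K)
    (hpure : IsPure K d) (hflag : IsFlag K) (hns : NoSquare K)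
    (hfree : NoFree K d) :
    s < fNum K 0 ∧ s ^ 2 < (d + 1) * fNum K d := by
  obtain ⟨e, rfl⟩ : ∃ e, d = e + 1 := ⟨d - 1, by omega⟩
  rw [Nat.add_sub_cancel] at hyp
  have hlink (v : V) : s ≤ #(facets (link K {v})) :=
    hyp V _ (isComplex_link hK (hvert v)) (isPure_link hK hpure) (isFlag_link hK hflag (hvert v))
      (noSquare_link hK hflag hns (hvert v)) (noFree_link hK hfree)
  obtain ⟨F, hF, -⟩ := exists_facet_superset hK.1
  obtain ⟨v, -⟩ := card_pos.1 (by rw [hpure F hF]; omega)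
  have hcard : s < Fintype.card V :=
    (hlink v).trans_lt (card_facets_link_lt_card hK hpure hflag hns hfree (hvert v))
  have hdouble : Fintype.card V * s ≤ (e + 1 + 1) * #(facets K) :=
    calc Fintype.card V * s ≤ ∑ F ∈ facets K, #F :=
          le_sum_card fun w => card_facets_link hK w ▸ hlink w
      _ = (e + 1 + 1) * #(facets K) := by
          rw [sum_congr rfl hpure, sum_const, smul_eq_mul, mul_comm]
  rw [fNum_zero_eq_card hvert, hpure.fNum_eq_card_facets, sq]
  exact ⟨hcard, (Nat.mul_lt_mul_of_pos_right hcard hs).trans_le hdouble⟩
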